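/- Let α₀ be a Harrop formula and S a set of sequents with C(α₀) ⊆ S. If Γ₀ ⇒ α₀ is immediately derivable from S, then S : Γ₀ | α₀ holds. -/
import Mathlib


/-- Propositional formulas over `⊥, ∨, ∧, ⊃` with variables. -/
inductive Fml : Type
  | var : ℕ → Fml
  | bot : Fml
  | and : Fml → Fml → Fml
  | or : Fml → Fml → Fml
  | imp : Fml → Fml → Fml
  deriving DecidableEq

abbrev Cedent := Finset Fml
abbrev Sequent := Cedent × Fml

/-- Natural deduction derivations for intuitionistic propositional logic (NJp),
with sequents `Γ ⇒ α`, axioms `α, Γ ⇒ α` and `⊥, Γ ⇒ p` for atoms `p`. -/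
inductive NJ : Cedent → Fml → Type
  | ax {Γ α} : α ∈ Γ → NJ Γ α
  | botE {Γ p} : Fml.bot ∈ Γ → NJ Γ (Fml.var p)
  | andI {Γ α β} : NJ Γ α → NJ Γ β → NJ Γ (Fml.and α β)
  | andE₀ {Γ α β} : NJ Γ (Fml.and α β) → NJ Γ α
  | andE₁ {Γ α β} : NJ Γ (Fml.and α β) → NJ Γ β
  | orI₀ {Γ α β} : NJ Γ α → NJ Γ (Fml.or α β)
  | orI₁ {Γ α β} : NJ Γ β → NJ Γ (Fml.or α β)
  | orE {Γ α β γ} : NJ Γ (Fml.or α β) → NJ (insert α Γ) γ → NJ (insert β Γ) γ → NJ Γ γ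
  | impI {Γ α β} : NJ (insert α Γ) β → NJ Γ (Fml.imp α β)
  | impE {Γ α β} : NJ Γ (Fml.imp α β) → NJ Γ α → NJ Γ β

/-- Intuitionistic derivability of a sequent. -/
def Derivable (Γ : Cedent) (α : Fml) : Prop := Nonempty (NJ Γ α)

/-- Harrop formulas: no strictly positive occurrence of `∨`. -/
def Harrop : Fml → Prop
  | .var _ => True
  | .bot => True
  | .and α β => Harrop α ∧ Harrop β
  | .or _ _ => False
  | .imp _ β => Harrop β

/-- A Harrop cedent: all of its formulas are Harrop. -/
def HarropCed (Γ : Cedent) : Prop := ∀ γ ∈ Γ, Harrop γ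

/-- Sequents immediately derivable (by cuts only) from a set of sequents `S`. -/
inductive ID (S : Set Sequent) : Sequent → Prop
  | mem {s} : s ∈ S → ID S s
  | cut {Γ Δ : Cedent} {α β : Fml} :
      ID S (Γ, β) → ID S (insert β Δ, α) → ID S (Γ ∪ Δ, α)

/-- The feasible variant of Aczel's slash: `Slash S Γ α` means `Γ ⇒ α` is immediately
derivable from `S` and the inductive slash conditions hold. -/
def Slash (S : Set Sequent) (Γ : Cedent) : Fml → Prop
  | .var n => ID S (Γ, Fml.var n)
  | .bot => ID S (Γ, Fml.bot)
  | .and β γ => ID S (Γ, Fml.and β γ) ∧ Slash S Γ β ∧ Slash S Γ γ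
  | .or β γ => ID S (Γ, Fml.or β γ) ∧ (Slash S Γ β ∨ Slash S Γ γ)
  | .imp β γ => ID S (Γ, Fml.imp β γ) ∧ (Slash S Γ β → Slash S Γ γ)

/-- The class `C(γ)` of sequents associated to a formula. -/
def Cset : Fml → Set Sequent
  | .var _ => ∅
  | .bot => ∅
  | .or _ _ => ∅
  | .imp α β => insert (({α, Fml.imp α β} : Finset Fml), β) (Cset β)
  | .and α β =>
      {(({Fml.and α β} : Finset Fml), α), (({Fml.and α β} : Finset Fml), β)} ∪ Cset α ∪ Cset β

lemma slash_id {S : Set Sequent} {Γ : Cedent} : ∀ {α : Fml}, Slash S Γ α → ID S (Γ, α)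
  | .var _, h => h
  | .bot, h => h
  | .and _ _, h => h.1
  | .or _ _, h => h.1
  | .imp _ _, h => h.1

/-- For a Harrop formula `α₀` with `C(α₀) ⊆ S`: if `Γ₀ ⇒ α₀` is immediately derivable
from `S`, then the slash `S : Γ₀ | α₀` holds. -/
theorem slash_harrop (α₀ : Fml) (hH : Harrop α₀) (S : Set Sequent) (hC : Cset α₀ ⊆ S)
    (Γ₀ : Cedent) (h : ID S (Γ₀, α₀)) : Slash S Γ₀ α₀ := by
  induction α₀ generalizing Γ₀ with
  | var n => exact h
  | bot => exact h
  | or α β _ _ => exact absurd hH (by simp [Harrop])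
  | and α β ihα ihβ =>
    have hmemα : ID S (({Fml.and α β} : Finset Fml), α) :=
      ID.mem (hC (by simp [Cset]))
    have hmemβ : ID S (({Fml.and α β} : Finset Fml), β) :=
      ID.mem (hC (by simp [Cset]))
    have hidα : ID S (Γ₀, α) := by
      have := ID.cut h (show ID S (insert (Fml.and α β) (∅ : Cedent), α) by
        simpa using hmemα)
      simpa using this
    have hidβ : ID S (Γ₀, β) := by
      have := ID.cut h (show ID S (insert (Fml.and α β) (∅ : Cedent), β) by
        simpa using hmemβ)
      simpa using this
    refine ⟨h, ?_, ?_⟩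
    · exact ihα hH.1 (fun x hx => hC (by simp [Cset]; tauto)) _ hidα
    · exact ihβ hH.2 (fun x hx => hC (by simp [Cset]; tauto)) _ hidβ
  | imp α β _ ihβ =>
    refine ⟨h, fun hs => ?_⟩
    have hidα : ID S (Γ₀, α) := slash_id hs
    have hmem : ID S (({α, Fml.imp α β} : Finset Fml), β) :=
      ID.mem (hC (by simp [Cset]))
    have h1 : ID S (Γ₀ ∪ {Fml.imp α β}, β) := ID.cut hidα hmem
    have h2 : ID S (insert (Fml.imp α β) Γ₀, β) := by
      have : Γ₀ ∪ {Fml.imp α β} = insert (Fml.imp α β) Γ₀ := by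
        ext x; simp [Finset.mem_insert, or_comm]
      rwa [this] at h1
    have h3 := ID.cut h h2
    have hidβ : ID S (Γ₀, β) := by simpa using h3
    exact ihβ (by exact hH) (fun x hx => hC (by simp [Cset]; tauto)) _ hidβ
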